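/- arXiv:math/0511361 — 2 statements merged into one kernel-verified Lean document; each statement's English description precedes it below -/
import Mathlib

section
/- Let A, A' ∈ Mₙ(ℤ) be matrices such that there is a common vector λ ∈ Kⁿ (K a number field) with entries forming a ℚ-basis of K, and a unit u ∈ K, satisfying Aλ = uλ and A'λ^σ = σ(u)λ^σ where σ is a field automorphism of K and λ^σ is the entrywise image. Then A and A' have the same characteristic polynomial. -/
/-- Let A, A' ∈ Mₙ(ℤ), λ ∈ Kⁿ with entries a ℚ-basis of the
number field K of degree n, u a unit of K (u and u⁻¹ algebraic integers), and
σ a field automorphism of K.  If Aλ = uλ and A'λ^σ = σ(u)λ^σ, then A and A'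
have the same characteristic polynomial. -/
theorem stmt15 (K : Type*) [Field K] [NumberField K]
    (n : ℕ) (hn : Module.finrank ℚ K = n)
    (lam : Fin n → K) (b : Module.Basis (Fin n) ℚ K) (hb : ⇑b = lam)
    (σ : K ≃+* K)
    (u : K) (hu : IsIntegral ℤ u) (hu' : IsIntegral ℤ u⁻¹) (hune : u ≠ 0)
    (A A' : Matrix (Fin n) (Fin n) ℤ)
    (hA : ∀ i, ∑ j, (A i j : K) * lam j = u * lam i)
    (hA' : ∀ i, ∑ j, (A' i j : K) * σ (lam j) = σ u * σ (lam i)) :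
    A.charpoly = A'.charpoly := by
  -- σ as a ℚ-linear equivalence
  let e : K ≃ₗ[ℚ] K :=
    { σ with
      map_smul' := fun q x => by
        simp [Rat.smul_def, map_mul, map_ratCast] }
  have hlin : LinearIndependent ℚ (fun j => σ (lam j)) := by
    have := (b.map e).linearIndependent
    simpa [Module.Basis.map, hb, e] using this
  suffices h : A = A' by rw [h]
  ext i j
  -- rows i of A and A' express σ (u * lam i) in the basis σ ∘ lam
  have key : ∑ l, ((A i l - A' i l : ℤ) : ℚ) • σ (lam l) = 0 := by
    have h1 : ∑ l, (A i l : K) * σ (lam l) = σ u * σ (lam i) := by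
      have := congrArg σ (hA i)
      simpa [map_sum, map_mul] using this
    have h2 := hA' i
    have := sub_eq_zero.mpr (h1.trans h2.symm)
    rw [← Finset.sum_sub_distrib] at this
    calc ∑ l, ((A i l - A' i l : ℤ) : ℚ) • σ (lam l)
        = ∑ l, ((A i l : K) * σ (lam l) - (A' i l : K) * σ (lam l)) := by
          refine Finset.sum_congr rfl fun l _ => ?_
          push_cast
          rw [Rat.smul_def]
          push_cast
          ring
      _ = 0 := this
  have := Fintype.linearIndependent_iff.mp hlin
    (fun l => ((A i l - A' i l : ℤ) : ℚ)) key j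
  have : ((A i j - A' i j : ℤ) : ℚ) = 0 := this
  exact_mod_cast sub_eq_zero.mp (by exact_mod_cast this)
end

section
/- Let K be a real number field of degree n ≥ 2 and m ⊆ K a full ℤ-module. Then the unit group of the order O = End(m) = {α ∈ K : α·m ⊆ m} is infinite; in particular there exists a unit u ∈ O with u ≠ ±1. -/
open NumberField NumberField.Units NumberField.Units.dirichletUnitTheorem

section Aux

variable {K : Type*} [Field K] [NumberField K]

/-- Denominator lemma: every element of `K` has a positive integer multiple in `m`. -/
lemma stmt18_denom (m : Submodule ℤ K)
    (hfull : Submodule.span ℚ (m : Set K) = ⊤) (z : K) :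
    ∃ d : ℤ, 0 < d ∧ d • z ∈ m := by
  have hz : z ∈ Submodule.span ℚ (m : Set K) := by rw [hfull]; trivial
  induction hz using Submodule.span_induction with
  | mem x hx => exact ⟨1, one_pos, by simpa using hx⟩
  | zero => exact ⟨1, one_pos, by simp⟩
  | add x y hx hy ihx ihy =>
      obtain ⟨d1, hd1, h1⟩ := ihx
      obtain ⟨d2, hd2, h2⟩ := ihy
      refine ⟨d1 * d2, mul_pos hd1 hd2, ?_⟩
      rw [smul_add]
      have e1 : (d1 * d2) • x = d2 • (d1 • x) := by rw [mul_comm, mul_smul]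
      have e2 : (d1 * d2) • y = d1 • (d2 • y) := by rw [mul_smul]
      rw [e1, e2]
      exact m.add_mem (m.smul_mem _ h1) (m.smul_mem _ h2)
  | smul a x hx ih =>
      obtain ⟨d, hd, h1⟩ := ih
      refine ⟨(a.den : ℤ) * d, mul_pos (by exact_mod_cast a.pos) hd, ?_⟩
      have key : (((a.den : ℤ) * d : ℤ) : ℚ) * a = ((a.num * d : ℤ) : ℚ) := by
        push_cast
        linear_combination (d : ℚ) * Rat.mul_den_eq_num a
      have hc : ((a.den : ℤ) * d) • (a • x) = a.num • (d • x) := calc ((a.den : ℤ) * d) • (a • x)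
          = ((((a.den : ℤ) * d : ℤ) : ℚ)) • (a • x) := (Int.cast_smul_eq_zsmul ℚ _ _).symm
        _ = ((((a.den : ℤ) * d : ℤ) : ℚ) * a) • x := (smul_smul _ _ _)
        _ = (((a.num * d : ℤ) : ℚ)) • x := by rw [key]
        _ = (a.num * d) • x := Int.cast_smul_eq_zsmul ℚ _ _
        _ = a.num • (d • x) := by rw [mul_smul]
      rw [hc]
      exact m.smul_mem _ h1

/-- Uniform denominator: for every `y : K` there is a positive integer `d`
such that `(d • y) * m ⊆ m`. -/
lemma stmt18_unif (m : Submodule ℤ K) (hfg : m.FG)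
    (hfull : Submodule.span ℚ (m : Set K) = ⊤) (y : K) :
    ∃ d : ℤ, 0 < d ∧ ∀ x ∈ m, (d • y) * x ∈ m := by
  obtain ⟨s, hs⟩ := hfg
  choose d hd hmem using fun g : K => stmt18_denom m hfull (y * g)
  refine ⟨∏ g ∈ s, d g, Finset.prod_pos (fun g _ => hd g), ?_⟩
  set D : ℤ := ∏ g ∈ s, d g with hD
  intro x hx
  let S : Submodule ℤ K :=
    { carrier := {x : K | (D • y) * x ∈ m}
      zero_mem' := by simp
      add_mem' := fun {a b} ha hb => by
        simp only [Set.mem_setOf_eq, mul_add] at *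
        exact m.add_mem ha hb
      smul_mem' := fun c {x} hx => by
        simp only [Set.mem_setOf_eq] at *
        rw [mul_smul_comm]
        exact m.smul_mem _ hx }
  have hle : m ≤ S := by
    rw [← hs]
    refine Submodule.span_le.mpr (fun g hg => ?_)
    show (D • y) * g ∈ m
    obtain ⟨e, he⟩ := Finset.dvd_prod_of_mem d hg
    rw [← hD] at he
    rw [smul_mul_assoc, he, mul_comm (d g) e, mul_smul]
    exact m.smul_mem _ (hmem g)
  exact hle hx

/-- Uniform denominator for the whole ring of integers: there is a positive
integer `N` such that `N · 𝓞 K · m ⊆ m`. -/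
lemma stmt18_order [NumberField K] (m : Submodule ℤ K) (hfg : m.FG)
    (hfull : Submodule.span ℚ (m : Set K) = ⊤) :
    ∃ N : ℤ, 0 < N ∧ ∀ (a : 𝓞 K), ∀ x ∈ m,
      ((N : K) * algebraMap (𝓞 K) K a) * x ∈ m := by
  obtain ⟨t, ht⟩ := Module.finite_def.mp (inferInstance : Module.Finite ℤ (𝓞 K))
  choose d hd hmem using fun b : 𝓞 K => stmt18_unif m hfg hfull (algebraMap (𝓞 K) K b)
  refine ⟨∏ b ∈ t, d b, Finset.prod_pos (fun b _ => hd b), ?_⟩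
  set N : ℤ := ∏ b ∈ t, d b with hN
  let S : Submodule ℤ (𝓞 K) :=
    { carrier := {a : 𝓞 K | ∀ x ∈ m, ((N : K) * algebraMap (𝓞 K) K a) * x ∈ m}
      zero_mem' := by simp
      add_mem' := fun {a b} ha hb x hx => by
        rw [map_add, mul_add, add_mul]
        exact m.add_mem (ha x hx) (hb x hx)
      smul_mem' := fun c {a} ha x hx => by
        rw [map_zsmul, mul_smul_comm, smul_mul_assoc]
        exact m.smul_mem _ (ha x hx) }
  have hle : (⊤ : Submodule ℤ (𝓞 K)) ≤ S := by
    rw [← ht]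
    refine Submodule.span_le.mpr (fun b hb x hx => ?_)
    obtain ⟨e, he⟩ := Finset.dvd_prod_of_mem d hb
    rw [← hN] at he
    have hNb : (N : K) * algebraMap (𝓞 K) K b = e • ((d b) • algebraMap (𝓞 K) K b) := by
      rw [← mul_smul, mul_comm e, ← he, zsmul_eq_mul]
    rw [hNb, smul_mul_assoc]
    exact m.smul_mem _ (hmem b x hx)
  exact fun a => hle (Submodule.mem_top (R := ℤ) (M := 𝓞 K) (x := a))

end Aux

/-- For a real number field K of degree n ≥ 2 and a full ℤ-module
m ⊆ K, the unit group of the order End(m) = {α ∈ K : α·m ⊆ m} is infinite; in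
particular it contains a unit u ≠ ±1. -/
theorem stmt18 (K : Type*) [Field K] [NumberField K] (f : K →+* ℝ)
    (hdeg : 2 ≤ Module.finrank ℚ K)
    (m : Submodule ℤ K) (hfg : m.FG)
    (hfull : Submodule.span ℚ (m : Set K) = ⊤)
    (U : Set K)
    (hU : U = {α : K | (∀ x ∈ m, α * x ∈ m) ∧
      ∃ β : K, (∀ x ∈ m, β * x ∈ m) ∧ α * β = 1}) :
    U.Infinite ∧ ∃ u ∈ U, u ≠ 1 ∧ u ≠ -1 := by
  classical
  -- Step 1: the unit rank is positive.
  have hreal : 1 ≤ NumberField.InfinitePlace.nrRealPlaces K := by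
    have hφ : NumberField.ComplexEmbedding.IsReal (Complex.ofRealHom.comp f) := by
      refine NumberField.ComplexEmbedding.isReal_iff.mpr (RingHom.ext fun x => ?_)
      simpa using Complex.conj_ofReal (f x)
    have : Nonempty {w : NumberField.InfinitePlace K // w.IsReal} :=
      ⟨⟨NumberField.InfinitePlace.mk _, NumberField.InfinitePlace.isReal_mk_iff.mpr hφ⟩⟩
    exact Fintype.card_pos
  have hcards := NumberField.InfinitePlace.card_add_two_mul_card_eq_rank K
  have hcard2 := NumberField.InfinitePlace.card_eq_nrRealPlaces_add_nrComplexPlaces K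
  have hrank : 0 < NumberField.Units.rank K := by
    rw [NumberField.Units.rank]
    omega
  -- Step 2: a unit of infinite order in `𝓞 K`.
  set ε : (𝓞 K)ˣ := NumberField.Units.fundSystem K ⟨0, hrank⟩ with hε
  have hford : ¬ IsOfFinOrder ε := by
    intro h
    have htor : ε ∈ NumberField.Units.torsion K := by
      rw [NumberField.Units.torsion, CommGroup.mem_torsion]; exact h
    have := (logEmbedding_eq_zero_iff (K := K) (x := ε)).mpr htor
    rw [hε, NumberField.Units.logEmbedding_fundSystem] at this
    exact Module.Basis.ne_zero (NumberField.Units.basisUnitLattice K) ⟨0, hrank⟩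
      (ZeroMemClass.coe_eq_zero.mp this)
  -- Step 3: a positive integer N with N·𝓞K·m ⊆ m.
  obtain ⟨N, hNpos, hNmem⟩ := stmt18_order m hfg hfull
  have hNO : (N : 𝓞 K) ≠ 0 := by exact_mod_cast hNpos.ne'
  set I : Ideal (𝓞 K) := Ideal.span {(N : 𝓞 K)} with hI
  -- Step 4: pigeonhole in the finite quotient 𝓞 K ⧸ I.
  haveI : Fintype ((𝓞 K) ⧸ I) :=
    @Fintype.ofFinite _ (Ideal.finiteQuotientOfFreeOfNeBot I (by
      rw [hI, Ne, Ideal.span_singleton_eq_bot]; exact hNO))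
  haveI : Finite ((𝓞 K) ⧸ I) := Finite.of_fintype _
  obtain ⟨i, j, hij, hsame⟩ := Finite.exists_ne_map_eq_of_infinite
    (fun k : ℕ => Ideal.Quotient.mk I (((ε : (𝓞 K)ˣ) : 𝓞 K) ^ k))
  -- reduce to i < j
  have key : ∀ i j : ℕ, i < j →
      (Ideal.Quotient.mk I (((ε : (𝓞 K)ˣ) : 𝓞 K) ^ i)
        = Ideal.Quotient.mk I (((ε : (𝓞 K)ˣ) : 𝓞 K) ^ j)) →
      ∃ s : ℕ, 0 < s ∧ ((↑(ε ^ s) : 𝓞 K) - 1 ∈ I) ∧ ((↑(ε⁻¹ ^ s) : 𝓞 K) - 1 ∈ I) := by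
    intro i j hlt heq
    obtain ⟨s, rfl⟩ : ∃ s, j = i + s := ⟨j - i, by omega⟩
    have hspos : 0 < s := by omega
    have hsub : ((ε : 𝓞 K)) ^ i - ((ε : 𝓞 K)) ^ (i + s) ∈ I := by
      rwa [Ideal.Quotient.eq] at heq
    refine ⟨s, hspos, ?_, ?_⟩
    · have h := I.mul_mem_left (↑(ε⁻¹ ^ i) : 𝓞 K) hsub
      have e : (↑(ε⁻¹ ^ i) : 𝓞 K) * (((ε : 𝓞 K)) ^ i - ((ε : 𝓞 K)) ^ (i + s))
          = 1 - (↑(ε ^ s) : 𝓞 K) := by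
        rw [mul_sub, ← Units.val_pow_eq_pow_val, ← Units.val_pow_eq_pow_val,
          ← Units.val_mul, ← Units.val_mul]
        have e1 : ε⁻¹ ^ i * ε ^ i = 1 := by group
        have e2 : ε⁻¹ ^ i * ε ^ (i + s) = ε ^ s := by group
        rw [e1, e2, Units.val_one]
      rw [e] at h
      have := I.neg_mem h
      simpa [neg_sub] using this
    · have h := I.mul_mem_left (↑(ε⁻¹ ^ (i + s)) : 𝓞 K) hsub
      have e : (↑(ε⁻¹ ^ (i + s)) : 𝓞 K) * (((ε : 𝓞 K)) ^ i - ((ε : 𝓞 K)) ^ (i + s))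
          = (↑(ε⁻¹ ^ s) : 𝓞 K) - 1 := by
        rw [mul_sub, ← Units.val_pow_eq_pow_val, ← Units.val_pow_eq_pow_val,
          ← Units.val_mul, ← Units.val_mul]
        have e1 : ε⁻¹ ^ (i + s) * ε ^ i = ε⁻¹ ^ s := by group
        have e2 : ε⁻¹ ^ (i + s) * ε ^ (i + s) = 1 := by group
        rw [e1, e2, Units.val_one]
      rw [e] at h
      exact h
  have hkey : ∃ s : ℕ, 0 < s ∧ ((↑(ε ^ s) : 𝓞 K) - 1 ∈ I) ∧ ((↑(ε⁻¹ ^ s) : 𝓞 K) - 1 ∈ I) := by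
    rcases Nat.lt_or_ge i j with h | h
    · exact key i j h hsame
    · exact key j i (by omega) hsame.symm
  obtain ⟨s, hs, hs1, hs2⟩ := hkey
  -- Step 5: the corresponding elements of K belong to U.
  have hmemO : ∀ a : 𝓞 K, a - 1 ∈ I → ∀ x ∈ m, (algebraMap (𝓞 K) K a) * x ∈ m := by
    intro a ha x hx
    obtain ⟨c, hc⟩ := Ideal.mem_span_singleton'.mp (hI ▸ ha)
    have ha1 : a = 1 + c * (N : 𝓞 K) := by linear_combination -hc
    rw [ha1, map_add, map_one, map_mul, map_intCast, add_mul, one_mul]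
    refine m.add_mem hx ?_
    have h' := hNmem c x hx
    rwa [mul_comm ((N : K)) (algebraMap (𝓞 K) K c)] at h'
  set u : K := algebraMap (𝓞 K) K (↑(ε ^ s) : 𝓞 K) with hu
  set v : K := algebraMap (𝓞 K) K (↑(ε⁻¹ ^ s) : 𝓞 K) with hv
  have huv : u * v = 1 := by
    rw [hu, hv, ← map_mul, ← Units.val_mul, inv_pow, mul_inv_cancel, Units.val_one, map_one]
  have huU : u ∈ U := by
    rw [hU]
    exact ⟨hmemO _ hs1, v, hmemO _ hs2, huv⟩
  -- U is closed under multiplication and contains 1.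
  have hUone : (1 : K) ∈ U := by
    rw [hU]
    exact ⟨fun x hx => by rwa [one_mul], 1, fun x hx => by rwa [one_mul], one_mul 1⟩
  have hUmul : ∀ a b : K, a ∈ U → b ∈ U → a * b ∈ U := by
    rw [hU]
    rintro a b ⟨ha1, βa, hβa1, hβa2⟩ ⟨hb1, βb, hβb1, hβb2⟩
    refine ⟨fun x hx => by rw [mul_assoc]; exact ha1 _ (hb1 x hx),
      βa * βb, fun x hx => by rw [mul_assoc]; exact hβa1 _ (hβb1 x hx), ?_⟩
    rw [mul_mul_mul_comm, hβa2, hβb2, one_mul]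
  have hupow : ∀ k : ℕ, u ^ k ∈ U := by
    intro k
    induction k with
    | zero => simpa using hUone
    | succ n ih => rw [pow_succ]; exact hUmul _ _ ih huU
  -- Step 6: injectivity of powers of u.
  have hη : ¬ IsOfFinOrder (ε ^ s) := by
    intro h
    obtain ⟨n, hn, h1⟩ := isOfFinOrder_iff_pow_eq_one.mp h
    exact hford (isOfFinOrder_iff_pow_eq_one.mpr
      ⟨s * n, by positivity, by rw [pow_mul, h1]⟩)
  have hinj : Function.Injective (fun k : ℕ => u ^ k) := by
    intro a b hab
    simp only [hu] at hab
    have h1 : algebraMap (𝓞 K) K (↑((ε ^ s) ^ a) : 𝓞 K)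
        = algebraMap (𝓞 K) K (↑((ε ^ s) ^ b) : 𝓞 K) := by
      rwa [Units.val_pow_eq_pow_val, Units.val_pow_eq_pow_val, map_pow, map_pow]
    have h2 : (ε ^ s) ^ a = (ε ^ s) ^ b :=
      Units.ext (NumberField.RingOfIntegers.coe_injective h1)
    exact injective_pow_iff_not_isOfFinOrder.mpr hη h2
  refine ⟨Set.infinite_of_injective_forall_mem hinj (fun k => hupow k), u, huU, ?_, ?_⟩
  · intro h
    have : u ^ 1 = u ^ 0 := by rw [pow_one, pow_zero, h]
    exact one_ne_zero (hinj this)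
  · intro h
    have : u ^ 2 = u ^ 0 := by rw [h]; norm_num
    exact two_ne_zero (hinj this)
end
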